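/- Let m, n, s be nonnegative integers and let β > 0. If m + n + s is even, then ∫_{-∞}^{∞} x^{s} e^{-βx²} H_m(x) H_n(x) dx = 2^{m+n} β^{-(m+n+s+1)/2} Σ_{k=0}^{min(m,n)} C(m,k) C(n,k) k! (β/2)^k Γ(1/2 − k + (m+n+s)/2) · ₂F₁(k − (m+n)/2, 1/2 + k − (m+n)/2; 1/2 + k − (m+n+s)/2; β). If m + n + s is odd, then ∫_{-∞}^{∞} x^{s} e^{-βx²} H_m(x) H_n(x) dx = 0. -/

import Mathlib

open MeasureTheory Finset Real

/-- Pochhammer symbol `(a)_k = a (a+1) ⋯ (a+k-1)`. -/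
noncomputable def poch (a : ℝ) (k : ℕ) : ℝ := ∏ i ∈ Finset.range k, (a + i)

/-- Generalized binomial coefficient `C(a, j) = (a-j+1)_j / j!`. -/
noncomputable def gbinom (a : ℝ) (j : ℕ) : ℝ := poch (a - j + 1) j / (j.factorial : ℝ)

/-- Generalized Laguerre polynomial `L_n^{(α)}`. -/
noncomputable def Lag (α : ℝ) (n : ℕ) (x : ℝ) : ℝ :=
  ∑ i ∈ Finset.range (n + 1),
    ((-1 : ℝ) ^ i / (i.factorial : ℝ)) * gbinom ((n : ℝ) + α) (n - i) * x ^ i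

/-- Physicists' Hermite polynomial `H_n`. -/
noncomputable def Herm (n : ℕ) (x : ℝ) : ℝ :=
  ∑ k ∈ Finset.range (n / 2 + 1),
    ((-1 : ℝ) ^ k * (n.factorial : ℝ) / ((k.factorial : ℝ) * ((n - 2 * k).factorial : ℝ))) *
      (2 * x) ^ (n - 2 * k)

/-- Jacobi polynomial `P_n^{(α,γ)}`. -/
noncomputable def Jac (α γ : ℝ) (n : ℕ) (x : ℝ) : ℝ :=
  ∑ k ∈ Finset.range (n + 1),
    gbinom ((n : ℝ) + α) (n - k) * gbinom ((n : ℝ) + γ) k *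
      ((x - 1) / 2) ^ k * ((x + 1) / 2) ^ (n - k)

/-- Terminating Lauricella function of type A. -/
noncomputable def lauricellaA {r : ℕ} (a : ℝ) (m : Fin r → ℕ) (c x : Fin r → ℝ) : ℝ :=
  ∑ j ∈ Fintype.piFinset (fun i => Finset.range (m i + 1)),
    poch a (∑ i, j i) *
      ∏ i, (poch (-(m i : ℝ)) (j i) / (poch (c i) (j i) * ((j i).factorial : ℝ)) * x i ^ (j i))

/-- Terminating Gauss hypergeometric sum `₂F₁(-k, b; c; x)`. -/
noncomputable def hyp2F1 (k : ℕ) (b c x : ℝ) : ℝ :=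
  ∑ j ∈ Finset.range (k + 1),
    poch (-(k : ℝ)) j * poch b j / (poch c j * (j.factorial : ℝ)) * x ^ j

/-- Terminating hypergeometric sum `₃F₂(-k, b₁, b₂; c₁, c₂; x)`. -/
noncomputable def hyp3F2 (k : ℕ) (b₁ b₂ c₁ c₂ x : ℝ) : ℝ :=
  ∑ j ∈ Finset.range (k + 1),
    poch (-(k : ℝ)) j * poch b₁ j * poch b₂ j /
      (poch c₁ j * poch c₂ j * (j.factorial : ℝ)) * x ^ j

/-- Gauss hypergeometric series `₂F₁(a, b; c; x)` (a terminating series when `a` or `b`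
is a nonpositive integer). -/
noncomputable def hypSum (a b c x : ℝ) : ℝ :=
  ∑' j : ℕ, poch a j * poch b j / (poch c j * (j.factorial : ℝ)) * x ^ j

/-- Terminating Appell function `F₂(a; -m₁, -m₂; c₁, c₂; x₁, x₂)`. -/
noncomputable def appellF2 (a : ℝ) (m₁ m₂ : ℕ) (c₁ c₂ x₁ x₂ : ℝ) : ℝ :=
  ∑ j₁ ∈ Finset.range (m₁ + 1), ∑ j₂ ∈ Finset.range (m₂ + 1),
    poch a (j₁ + j₂) * poch (-(m₁ : ℝ)) j₁ * poch (-(m₂ : ℝ)) j₂ /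
      (poch c₁ j₁ * poch c₂ j₂ * (j₁.factorial : ℝ) * (j₂.factorial : ℝ)) * x₁ ^ j₁ * x₂ ^ j₂

/-- `1/z!` with the convention that it vanishes for negative integers `z`. -/
noncomputable def invFacZ (z : ℤ) : ℝ := if 0 ≤ z then ((z.toNat.factorial : ℕ) : ℝ)⁻¹ else 0

/-- Pochhammer symbol extended to integer index via `(a)_k = Γ(a+k)/Γ(a)` for negative `k`. -/
noncomputable def pochZ (a : ℝ) (k : ℤ) : ℝ :=
  if 0 ≤ k then poch a k.toNat else Real.Gamma (a + (k : ℝ)) / Real.Gamma a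

/-!
The linearization `H_m H_n = ∑ₖ 2ᵏ k! C(m,k) C(n,k) H_{m+n-2k}`, proved by induction on `n`
from the three-term recurrence, reduces the integral to the moments `∫ xˢ e^{-βx²} H_N(x) dx`
of a single Hermite polynomial. Expanding `H_N` into monomials, the `i`-th Gaussian moment is
`Γ(a - i) β^{-(a-i)}` with `a = (N + s + 1)/2`; the duplication formula
`(c)ᵢ (c + 1/2)ᵢ 4ⁱ = (2c)₂ᵢ` and the reflection `Γ(a - i) = (-1)ⁱ Γ(a) / (1 - a)ᵢ` turn
this sum into `2^N β^{-a} Γ(a) ₂F₁(-N/2, (1-N)/2; 1-a; β)`. For odd `m + n + s` the integrand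
is odd, since `H_n(-x) = (-1)ⁿ H_n(x)`.
-/

namespace HermiteKrein

lemma poch_zero (a : ℝ) : poch a 0 = 1 := by simp [poch]

lemma poch_succ (a : ℝ) (k : ℕ) : poch a (k + 1) = poch a k * (a + k) := by
  simp [poch, prod_range_succ]

lemma poch_succ' (a : ℝ) (k : ℕ) : poch a (k + 1) = a * poch (a + 1) k := by
  simp only [poch, prod_range_succ', Nat.cast_add, Nat.cast_one, Nat.cast_zero, add_zero]
  rw [mul_comm]
  congr 1
  exact prod_congr rfl fun i _ => by ring

lemma poch_pos {a : ℝ} (ha : 0 < a) (k : ℕ) : 0 < poch a k :=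
  prod_pos fun i _ => by positivity

lemma poch_neg_natCast (N k : ℕ) : poch (-N) k = (-1) ^ k * N.descFactorial k := by
  induction k with
  | zero => simp [poch_zero]
  | succ k ih =>
    rw [poch_succ, ih, Nat.descFactorial_succ, pow_succ]
    rcases le_or_gt k N with hk | hk
    · push_cast [Nat.cast_sub hk]
      ring
    · simp [Nat.descFactorial_eq_zero_iff_lt.mpr hk]

lemma poch_mul_poch_add_half (a : ℝ) (t : ℕ) :
    poch a t * poch (a + 1 / 2) t * 4 ^ t = poch (2 * a) (2 * t) := by
  induction t with
  | zero => simp [poch_zero]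
  | succ t ih =>
    rw [show 2 * (t + 1) = 2 * t + 1 + 1 by ring, poch_succ, poch_succ, poch_succ, poch_succ,
      ← ih]
    push_cast
    ring

lemma poch_one_sub (a : ℝ) (t : ℕ) : poch (1 - a) t = (-1) ^ t * poch (a - t) t := by
  induction t generalizing a with
  | zero => simp [poch_zero]
  | succ t ih =>
    rw [poch_succ', show 1 - a + 1 = 1 - (a - 1) by ring, ih, poch_succ]
    push_cast
    ring_nf

lemma Gamma_add_natCast {y : ℝ} (hy : 0 < y) (t : ℕ) :
    Gamma (y + t) = poch y t * Gamma y := by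
  induction t with
  | zero => simp [poch_zero]
  | succ t ih =>
    rw [Nat.cast_succ, ← add_assoc, Gamma_add_one (by positivity), ih, poch_succ]
    ring

lemma Gamma_div_poch_one_sub {a : ℝ} {t : ℕ} (ht : (t : ℝ) < a) :
    Gamma a / poch (1 - a) t = (-1) ^ t * Gamma (a - t) := by
  have hpos : 0 < a - t := by linarith
  rw [poch_one_sub, ← sub_add_cancel a t, Gamma_add_natCast hpos, add_sub_cancel_right]
  have := (poch_pos hpos t).ne'
  field_simp
  rw [← pow_mul, Even.neg_one_pow ⟨t, by ring⟩]

lemma integral_eq_zero_of_odd {f : ℝ → ℝ} (hf : Function.Odd f) : ∫ x, f x = 0 := by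
  have h := integral_neg_eq_self f volume
  rw [show (fun x => f (-x)) = fun x => -f x from funext hf, integral_neg] at h
  linarith

lemma integrable_pow_mul_exp_neg_mul_sq {β : ℝ} (hβ : 0 < β) (k : ℕ) :
    Integrable fun x : ℝ => x ^ k * exp (-β * x ^ 2) := by
  simpa [rpow_natCast] using
    integrable_rpow_mul_exp_neg_mul_sq hβ (s := k) (by linarith [k.cast_nonneg (α := ℝ)])

lemma integral_pow_mul_exp_neg_mul_sq {β : ℝ} (hβ : 0 < β) {k : ℕ} (hk : Even k) :
    ∫ x : ℝ, x ^ k * exp (-β * x ^ 2) = Gamma ((k + 1) / 2) * β ^ (-((k + 1) / 2 : ℝ)) := by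
  have h := integral_rpow_mul_exp_neg_mul_rpow (p := 2) (q := k) two_pos
    (by linarith [k.cast_nonneg (α := ℝ)]) hβ
  rw [setIntegral_congr_fun measurableSet_Ioi fun x _ => by
    rw [rpow_two, rpow_natCast]] at h
  have habs : (fun x : ℝ => x ^ k * exp (-β * x ^ 2))
      = fun x => |x| ^ k * exp (-β * |x| ^ 2) := by
    funext x
    rw [hk.pow_abs, sq_abs]
  rw [habs, integral_comp_abs (f := fun x => x ^ k * exp (-β * x ^ 2)), h]
  ring_nf

lemma Herm_neg (n : ℕ) (x : ℝ) : Herm n (-x) = (-1) ^ n * Herm n x := by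
  rw [Herm, Herm, mul_sum]
  refine sum_congr rfl fun k hk => ?_
  have h2k : 2 * k ≤ n := by have := mem_range.mp hk; omega
  have hsign : (-1 : ℝ) ^ n = (-1) ^ (n - 2 * k) := by
    conv_lhs => rw [← Nat.sub_add_cancel h2k, pow_add, pow_mul, neg_one_sq, one_pow, mul_one]
  rw [mul_neg, neg_pow (2 * x), hsign]
  ring

/-- Written with `descFactorial` so that it vanishes for `n < 2 * k`. -/
noncomputable def hermTerm (n k : ℕ) (x : ℝ) : ℝ :=
  (-1) ^ k * n.descFactorial (2 * k) / k.factorial * (2 * x) ^ (n - 2 * k)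

lemma hermTerm_eq_zero {n k : ℕ} (h : n < 2 * k) (x : ℝ) : hermTerm n k x = 0 := by
  simp [hermTerm, Nat.descFactorial_eq_zero_iff_lt.mpr h]

lemma hermTerm_zero (n : ℕ) (x : ℝ) : hermTerm n 0 x = (2 * x) ^ n := by
  simp [hermTerm]

lemma hermTerm_succ_succ (n k : ℕ) (x : ℝ) :
    hermTerm (n + 2) (k + 1) x
      = 2 * x * hermTerm (n + 1) (k + 1) x - 2 * (n + 1) * hermTerm n k x := by
  rcases lt_trichotomy n (2 * k) with h | rfl | h
  · rw [hermTerm_eq_zero (by omega), hermTerm_eq_zero (by omega), hermTerm_eq_zero h]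
    ring
  · rw [hermTerm_eq_zero (n := 2 * k + 1) (k := k + 1) (by omega)]
    simp only [hermTerm, show 2 * (k + 1) = 2 * k + 1 + 1 by ring, Nat.succ_descFactorial_succ,
      Nat.sub_self, Nat.factorial_succ]
    push_cast
    field_simp
    ring
  · obtain ⟨d, hd⟩ : ∃ d, n - 2 * k = d + 1 := ⟨n - 2 * k - 1, by omega⟩
    simp only [hermTerm, show 2 * (k + 1) = 2 * k + 1 + 1 by ring, Nat.succ_descFactorial_succ,
      Nat.descFactorial_succ, Nat.factorial_succ, hd, show n + 2 - (2 * k + 1 + 1) = d + 1 by omega,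
      show n + 1 - (2 * k + 1 + 1) = d by omega]
    have hn : (n : ℝ) = d + 2 * k + 1 := by exact_mod_cast (by omega : n = d + 2 * k + 1)
    push_cast
    field_simp
    rw [hn]
    ring

lemma Herm_eq_sum_hermTerm {n K : ℕ} (hK : n / 2 < K) (x : ℝ) :
    Herm n x = ∑ k ∈ range K, hermTerm n k x := by
  rw [eventually_constant_sum (fun k hk => hermTerm_eq_zero (by omega) x) hK, Herm]
  refine sum_congr rfl fun k hk => ?_
  have h2k : 2 * k ≤ n := by have := mem_range.mp hk; omega
  rw [hermTerm, ← Nat.factorial_mul_descFactorial h2k]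
  push_cast
  field_simp

lemma Herm_one (x : ℝ) : Herm 1 x = 2 * x := by simp [Herm]

lemma Herm_succ_succ (n : ℕ) (x : ℝ) :
    Herm (n + 2) x = 2 * x * Herm (n + 1) x - 2 * (n + 1) * Herm n x := by
  rw [Herm_eq_sum_hermTerm (n := n + 2) (K := n + 2) (by omega),
    Herm_eq_sum_hermTerm (n := n + 1) (K := n + 2) (by omega),
    Herm_eq_sum_hermTerm (n := n) (K := n + 1) (by omega),
    sum_range_succ' (fun k => hermTerm (n + 2) k x),
    sum_range_succ' (fun k => hermTerm (n + 1) k x)]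
  simp only [hermTerm_succ_succ, hermTerm_zero, sum_sub_distrib, ← mul_sum]
  ring

lemma two_mul_mul_Herm (n : ℕ) (x : ℝ) :
    2 * x * Herm n x = Herm (n + 1) x + 2 * n * Herm (n - 1) x := by
  cases n with
  | zero => simp [Herm]
  | succ n =>
    rw [Herm_succ_succ, Nat.add_sub_cancel]
    push_cast
    ring

lemma cast_choose_succ_mul (m k : ℕ) :
    (m.choose (k + 1) : ℝ) * (k + 1) = m.choose k * ((m : ℝ) - k) := by
  rcases le_or_gt k m with h | h
  · have hc := congrArg (Nat.cast (R := ℝ)) (Nat.choose_succ_right_eq m k)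
    push_cast [Nat.cast_sub h] at hc
    exact hc
  · simp [Nat.choose_eq_zero_of_lt h, Nat.choose_eq_zero_of_lt (Nat.lt_succ_of_lt h)]

lemma cast_choose_mul_succ (n k : ℕ) :
    (n.choose k : ℝ) * (n + 1) = (n + 1).choose k * ((n : ℝ) + 1 - k) := by
  rcases le_or_gt k (n + 1) with h | h
  · have hc := congrArg (Nat.cast (R := ℝ)) (Nat.choose_mul_succ_eq n k)
    push_cast [Nat.cast_sub h] at hc
    exact hc
  · simp [Nat.choose_eq_zero_of_lt h, Nat.choose_eq_zero_of_lt (Nat.lt_of_succ_lt h)]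

noncomputable def linCoeff (m n k : ℕ) : ℝ := 2 ^ k * k.factorial * m.choose k * n.choose k

lemma linCoeff_zero (m n : ℕ) : linCoeff m n 0 = 1 := by simp [linCoeff]

lemma linCoeff_eq_zero_of_lt_left {m n k : ℕ} (h : m < k) : linCoeff m n k = 0 := by
  simp [linCoeff, Nat.choose_eq_zero_of_lt h]

lemma linCoeff_eq_zero_of_lt_right {m n k : ℕ} (h : n < k) : linCoeff m n k = 0 := by
  simp [linCoeff, Nat.choose_eq_zero_of_lt h]

lemma linCoeff_succ_succ (m n k : ℕ) :
    linCoeff m (n + 2) (k + 1) = linCoeff m (n + 1) (k + 1)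
      + 2 * ((m : ℝ) + n + 1 - 2 * k) * linCoeff m (n + 1) k - 2 * (n + 1) * linCoeff m n k := by
  have hpascal : ((n + 2).choose (k + 1) : ℝ) = (n + 1).choose (k + 1) + (n + 1).choose k := by
    rw [Nat.choose_succ_succ (n + 1) k]
    push_cast
    ring
  simp only [linCoeff, hpascal, Nat.factorial_succ]
  push_cast
  linear_combination (2 * 2 ^ k * (k.factorial : ℝ) * ((n + 1).choose k : ℝ)) *
      cast_choose_succ_mul m k
    + (2 * 2 ^ k * (k.factorial : ℝ) * (m.choose k : ℝ)) * cast_choose_mul_succ n k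

lemma linCoeff_mul_two_mul_mul_Herm (m n k : ℕ) (x : ℝ) :
    linCoeff m (n + 1) k * (2 * x * Herm (m + (n + 1) - 2 * k) x)
      = linCoeff m (n + 1) k * Herm (m + (n + 2) - 2 * k) x
        + 2 * ((m : ℝ) + n + 1 - 2 * k) * linCoeff m (n + 1) k * Herm (m + n - 2 * k) x := by
  rcases le_or_gt (2 * k) (m + n + 1) with h | h
  · rw [two_mul_mul_Herm, show m + (n + 1) - 2 * k + 1 = m + (n + 2) - 2 * k by omega,
      show m + (n + 1) - 2 * k - 1 = m + n - 2 * k by omega,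
      Nat.cast_sub (by omega : 2 * k ≤ m + (n + 1))]
    push_cast
    ring
  · rcases lt_or_ge m k with hm | hn
    · simp [linCoeff_eq_zero_of_lt_left hm]
    · simp [linCoeff_eq_zero_of_lt_right (show n + 1 < k by omega)]

lemma Herm_mul_Herm_eq_sum_of_lt (m : ℕ) {n K : ℕ} (hK : n < K) (x : ℝ) :
    Herm m x * Herm n x = ∑ k ∈ range K, linCoeff m n k * Herm (m + n - 2 * k) x := by
  induction n using Nat.twoStepInduction generalizing K with
  | zero =>
    rw [eventually_constant_sum (fun k hk => by rw [linCoeff_eq_zero_of_lt_right hk, zero_mul]) hK]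
    simp [linCoeff_zero, Herm]
  | one =>
    have h₁ : linCoeff m 1 1 = 2 * m := by simp [linCoeff]
    rw [eventually_constant_sum (N := 2)
      (fun k hk => by rw [linCoeff_eq_zero_of_lt_right (by omega), zero_mul]) hK,
      sum_range_succ, sum_range_one, linCoeff_zero, h₁, Herm_one, mul_comm, two_mul_mul_Herm,
      show m + 1 - 2 * 1 = m - 1 by omega, Nat.mul_zero, Nat.sub_zero, one_mul]
  | more n ih₀ ih₁ =>
    obtain ⟨K, rfl⟩ : ∃ K', K = K' + 1 := ⟨K - 1, by omega⟩
    have hshift : ∀ k, m + (n + 2) - 2 * (k + 1) = m + n - 2 * k := fun k => by omega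
    have hlast : ∑ k ∈ range (K + 1),
          2 * ((m : ℝ) + n + 1 - 2 * k) * linCoeff m (n + 1) k * Herm (m + n - 2 * k) x
        = ∑ k ∈ range K,
          2 * ((m : ℝ) + n + 1 - 2 * k) * linCoeff m (n + 1) k * Herm (m + n - 2 * k) x := by
      rw [sum_range_succ, linCoeff_eq_zero_of_lt_right (by omega : n + 1 < K)]
      ring
    calc Herm m x * Herm (n + 2) x
        = 2 * x * (Herm m x * Herm (n + 1) x) - 2 * (n + 1) * (Herm m x * Herm n x) := by
          rw [Herm_succ_succ]; ring
      _ = ∑ k ∈ range (K + 1), linCoeff m (n + 1) k * (2 * x * Herm (m + (n + 1) - 2 * k) x)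
          - ∑ k ∈ range K, 2 * (n + 1) * linCoeff m n k * Herm (m + n - 2 * k) x := by
          rw [ih₁ (K := K + 1) (by omega), ih₀ (K := K) (by omega), mul_sum, mul_sum]
          congr 1 <;> exact sum_congr rfl fun k _ => by ring
      _ = ∑ k ∈ range (K + 1), linCoeff m (n + 1) k * Herm (m + (n + 2) - 2 * k) x
          + ∑ k ∈ range K,
            2 * ((m : ℝ) + n + 1 - 2 * k) * linCoeff m (n + 1) k * Herm (m + n - 2 * k) x
          - ∑ k ∈ range K, 2 * (n + 1) * linCoeff m n k * Herm (m + n - 2 * k) x := by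
          simp_rw [linCoeff_mul_two_mul_mul_Herm]
          rw [sum_add_distrib, hlast]
      _ = ∑ k ∈ range (K + 1), linCoeff m (n + 2) k * Herm (m + (n + 2) - 2 * k) x := by
          rw [sum_range_succ' (fun k => linCoeff m (n + 1) k * _),
            sum_range_succ' (fun k => linCoeff m (n + 2) k * _)]
          simp only [hshift, linCoeff_zero, linCoeff_succ_succ, add_mul, sub_mul, sum_add_distrib,
            sum_sub_distrib]
          ring

lemma Herm_mul_Herm (m n : ℕ) (x : ℝ) :
    Herm m x * Herm n x
      = ∑ k ∈ range (min m n + 1), linCoeff m n k * Herm (m + n - 2 * k) x := by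
  rw [Herm_mul_Herm_eq_sum_of_lt m n.lt_succ_self,
    eventually_constant_sum (N := min m n + 1) (fun k hk => ?_) (by omega)]
  rcases le_total m n with h | h
  · rw [linCoeff_eq_zero_of_lt_left (by omega), zero_mul]
  · rw [linCoeff_eq_zero_of_lt_right (by omega), zero_mul]

lemma poch_neg_half_mul_poch (N j : ℕ) :
    poch (-N / 2) j * poch (1 / 2 - N / 2) j = N.descFactorial (2 * j) / 4 ^ j := by
  have h := poch_mul_poch_add_half (-N / 2) j
  rw [show 2 * (-N / 2 : ℝ) = -N by ring, poch_neg_natCast, pow_mul, neg_one_sq, one_pow, one_mul,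
    show -(N : ℝ) / 2 + 1 / 2 = 1 / 2 - N / 2 by ring] at h
  rw [← h]
  field_simp

lemma hypSum_eq_sum {a b c x : ℝ} {J : ℕ} (h : ∀ j ≥ J, poch a j * poch b j = 0) :
    hypSum a b c x = ∑ j ∈ range J, poch a j * poch b j / (poch c j * j.factorial) * x ^ j :=
  tsum_eq_sum fun j hj => by rw [h j (by simpa using hj), zero_div, zero_mul]

lemma pow_mul_exp_mul_Herm_eq_sum (β : ℝ) (N s : ℕ) (x : ℝ) :
    x ^ s * exp (-β * x ^ 2) * Herm N x = ∑ i ∈ range (N / 2 + 1),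
      (-1) ^ i * N.factorial / (i.factorial * (N - 2 * i).factorial) * 2 ^ (N - 2 * i)
        * (x ^ (s + (N - 2 * i)) * exp (-β * x ^ 2)) := by
  rw [Herm, mul_sum]
  exact sum_congr rfl fun i _ => by ring

lemma integrable_pow_mul_exp_mul_Herm {β : ℝ} (hβ : 0 < β) (N s : ℕ) :
    Integrable fun x : ℝ => x ^ s * exp (-β * x ^ 2) * Herm N x := by
  simp_rw [pow_mul_exp_mul_Herm_eq_sum]
  exact integrable_finsetSum _ fun i _ => (integrable_pow_mul_exp_neg_mul_sq hβ _).const_mul _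

lemma integral_pow_mul_exp_mul_Herm {β : ℝ} (hβ : 0 < β) {N s : ℕ} (hNs : Even (N + s)) :
    ∫ x : ℝ, x ^ s * exp (-β * x ^ 2) * Herm N x
      = 2 ^ N * β ^ (-((N : ℝ) + s + 1) / 2) * Gamma (((N : ℝ) + s + 1) / 2)
        * hypSum (-N / 2) (1 / 2 - N / 2) (1 - ((N : ℝ) + s + 1) / 2) β := by
  set a : ℝ := ((N : ℝ) + s + 1) / 2 with ha
  simp_rw [pow_mul_exp_mul_Herm_eq_sum]
  rw [integral_finsetSum _ fun i _ => (integrable_pow_mul_exp_neg_mul_sq hβ _).const_mul _,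
    hypSum_eq_sum (J := N / 2 + 1) fun j hj => by
      rw [poch_neg_half_mul_poch, Nat.descFactorial_eq_zero_iff_lt.mpr (by omega), Nat.cast_zero,
        zero_div],
    mul_sum]
  refine sum_congr rfl fun i hi => ?_
  have h2i : 2 * i ≤ N := by have := mem_range.mp hi; omega
  have hai : (i : ℝ) < a := by
    have : (2 * i : ℝ) ≤ N := by exact_mod_cast h2i
    linarith [s.cast_nonneg (α := ℝ)]
  obtain ⟨r, hr⟩ := hNs
  have hmoment := integral_pow_mul_exp_neg_mul_sq hβ (k := s + (N - 2 * i)) ⟨r - i, by omega⟩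
  push_cast [Nat.cast_sub h2i] at hmoment
  rw [show ((s : ℝ) + (N - 2 * i) + 1) / 2 = a - i by rw [ha]; ring] at hmoment
  have hΓ : Gamma (a - i) = (-1) ^ i * (Gamma a / poch (1 - a) i) := by
    rw [Gamma_div_poch_one_sub hai, ← mul_assoc, ← pow_add, Even.neg_one_pow ⟨i, rfl⟩, one_mul]
  have hβ' : β ^ (-(a - i)) = β ^ (-a) * β ^ i := by
    rw [← rpow_natCast, ← rpow_add hβ]
    ring_nf
  have hpoch : poch (1 - a) i ≠ 0 := by
    rw [poch_one_sub]
    exact mul_ne_zero (by simp) (poch_pos (by linarith) i).ne'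
  have h2 : (2 : ℝ) ^ N = 2 ^ (N - 2 * i) * 4 ^ i := by
    rw [show (4 : ℝ) = 2 ^ 2 by norm_num, ← pow_mul, ← pow_add, Nat.sub_add_cancel h2i]
  rw [integral_const_mul, hmoment, hΓ, hβ', poch_neg_half_mul_poch, h2,
    ← Nat.factorial_mul_descFactorial h2i]
  push_cast
  field_simp
  rw [← pow_mul, Even.neg_one_pow ⟨i, by ring⟩, one_mul]

lemma odd_pow_mul_exp_mul_Herm_mul_Herm (β : ℝ) {m n s : ℕ} (h : Odd (m + n + s)) :
    Function.Odd fun x : ℝ => x ^ s * exp (-β * x ^ 2) * Herm m x * Herm n x := by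
  intro x
  have hsign : (-1 : ℝ) ^ (m + n + s) = -1 := h.neg_one_pow
  rw [pow_add, pow_add] at hsign
  dsimp only
  rw [neg_sq, neg_pow x s, Herm_neg, Herm_neg]
  linear_combination (x ^ s * exp (-β * x ^ 2) * Herm m x * Herm n x) * hsign

lemma integral_pow_mul_exp_mul_Herm_mul_Herm {β : ℝ} (hβ : 0 < β) (m n s : ℕ) :
    ∫ x : ℝ, x ^ s * exp (-β * x ^ 2) * Herm m x * Herm n x
      = ∑ k ∈ range (min m n + 1),
        linCoeff m n k * ∫ x : ℝ, x ^ s * exp (-β * x ^ 2) * Herm (m + n - 2 * k) x := by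
  have hlin (x : ℝ) : x ^ s * exp (-β * x ^ 2) * Herm m x * Herm n x
      = ∑ k ∈ range (min m n + 1),
        linCoeff m n k * (x ^ s * exp (-β * x ^ 2) * Herm (m + n - 2 * k) x) := by
    rw [mul_assoc, Herm_mul_Herm, mul_sum]
    exact sum_congr rfl fun k _ => by ring
  simp_rw [hlin]
  rw [integral_finsetSum _ fun k _ => (integrable_pow_mul_exp_mul_Herm hβ _ s).const_mul _]
  exact sum_congr rfl fun k _ => integral_const_mul _ _

end HermiteKrein

open HermiteKrein

/-- Krein-like 2-functional of Hermite polynomials (algebraic approach). -/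
theorem hermite_krein_2_functional_algebraic (m n s : ℕ) (β : ℝ) (hβ : 0 < β) :
    (Even (m + n + s) →
      ∫ x : ℝ, x ^ s * Real.exp (-β * x ^ 2) * Herm m x * Herm n x =
        (2 : ℝ) ^ (m + n) * β ^ (-(((m : ℝ) + (n : ℝ) + (s : ℝ)) + 1) / 2) *
          ∑ k ∈ Finset.range (min m n + 1),
            (m.choose k : ℝ) * (n.choose k : ℝ) * (k.factorial : ℝ) * (β / 2) ^ k *
              Real.Gamma (1 / 2 - (k : ℝ) + ((m : ℝ) + (n : ℝ) + (s : ℝ)) / 2) *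
              hypSum ((k : ℝ) - ((m : ℝ) + (n : ℝ)) / 2)
                (1 / 2 + (k : ℝ) - ((m : ℝ) + (n : ℝ)) / 2)
                (1 / 2 + (k : ℝ) - ((m : ℝ) + (n : ℝ) + (s : ℝ)) / 2) β) ∧
    (Odd (m + n + s) →
      ∫ x : ℝ, x ^ s * Real.exp (-β * x ^ 2) * Herm m x * Herm n x = 0) := by
  refine ⟨fun hEven => ?_, fun hOdd => integral_eq_zero_of_odd
    (odd_pow_mul_exp_mul_Herm_mul_Herm β hOdd)⟩
  rw [integral_pow_mul_exp_mul_Herm_mul_Herm hβ, mul_sum]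
  refine sum_congr rfl fun k hk => ?_
  have h2k : 2 * k ≤ m + n := by have := mem_range.mp hk; omega
  set N := m + n - 2 * k
  have hN : (N : ℝ) = m + n - 2 * k := by push_cast [N, Nat.cast_sub h2k]; ring
  obtain ⟨r, hr⟩ := hEven
  rw [integral_pow_mul_exp_mul_Herm hβ ⟨r - k, by omega⟩]
  have hΓ : Gamma (((N : ℝ) + s + 1) / 2) = Gamma (1 / 2 - k + ((m : ℝ) + n + s) / 2) := by
    rw [hN]; ring_nf
  have hF : hypSum (-N / 2) (1 / 2 - N / 2) (1 - ((N : ℝ) + s + 1) / 2) β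
      = hypSum (k - ((m : ℝ) + n) / 2) (1 / 2 + k - ((m : ℝ) + n) / 2)
          (1 / 2 + k - ((m : ℝ) + n + s) / 2) β := by
    rw [hN]; ring_nf
  have hβk : β ^ (-((N : ℝ) + s + 1) / 2) = β ^ (-(((m : ℝ) + n + s) + 1) / 2) * β ^ k := by
    rw [← rpow_natCast, ← rpow_add hβ, hN]; ring_nf
  have h2 : (2 : ℝ) ^ (m + n) = 2 ^ N * 2 ^ k * 2 ^ k := by
    rw [← pow_add, ← pow_add]; congr 1; omega
  rw [hΓ, hF, hβk, h2, div_pow, linCoeff]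
  field_simp
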